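/- arXiv:1101.5544 — 2 statements merged into one kernel-verified Lean document; each statement's English description precedes it below -/
import Mathlib

section
/- For every integer n ≥ 1, the operator D(α) satisfies D(α)·Q_n(α) = (α²n² − nα)·Q_n(α), i.e. the one-row Jack function Q_n(α) is an eigenvector of D(α) with eigenvalue α²n² − nα. -/
open scoped BigOperators Classical
open MvPolynomial

noncomputable section JackPaper

/-- The base field `F = ℚ(α)`, rational functions over `ℚ`. -/
abbrev F : Type := RatFunc ℚ

/-- The parameter `α`, an indeterminate of `F = ℚ(α)`. -/
noncomputable def al : F := RatFunc.X

/-- The ring of symmetric functions `Λ_F = F[p₁, p₂, …]`, realized as the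
polynomial ring over `F` in countably many variables `p_k`, `k ≥ 1`. -/
abbrev SymF : Type := MvPolynomial ℕ+ F

/-- The power sum `p_k` (with the convention `p_0 = 1`, never used for partitions). -/
noncomputable def pvar (k : ℕ) : SymF :=
  if h : 0 < k then MvPolynomial.X (⟨k, h⟩ : ℕ+) else 1

/-- The partial derivative `∂/∂p_k` as a linear map on `Λ_F`. -/
noncomputable def pdiff (k : ℕ) : SymF →ₗ[F] SymF :=
  if h : 0 < k then (MvPolynomial.pderiv (⟨k, h⟩ : ℕ+)).toLinearMap else 0

/-- The weight function giving `p_k` degree `k`. -/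
def wfun : ℕ+ → ℕ := fun k => (k : ℕ)

/-- The (weighted) degree of a symmetric function. -/
def wdeg (f : SymF) : ℕ := f.support.sup fun d => d.sum fun k e => (k : ℕ) * e

/-- The Laplace–Beltrami type operator
`D(α) = Σ_{i,j≥1} (i+j)α p_i p_j ∂/∂p_{i+j} + Σ_{i,j≥1} ij α² p_{i+j} ∂²/(∂p_i∂p_j)
  + α(α−1) Σ_{k≥1} k² p_k ∂/∂p_k`.
The sums are locally finite: on a fixed `f` all terms with index beyond `wdeg f` vanish,
so the truncated sum below is the honest value of the infinite sum. -/
noncomputable def Dop (f : SymF) : SymF :=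
  (∑ i ∈ Finset.Icc 1 (wdeg f), ∑ j ∈ Finset.Icc 1 (wdeg f),
    (((((i : ℕ) + j : ℕ) : F) * al) • (pvar i * pvar j * pdiff (i + j) f)
      + ((((i * j : ℕ) : F) * al ^ 2) • (pvar (i + j) * pdiff i (pdiff j f)))))
  + (al * (al - 1)) • ∑ k ∈ Finset.Icc 1 (wdeg f), ((k : F) ^ 2) • (pvar k * pdiff k f)

/-- The parts of a partition sorted in decreasing order: `λ₁ ≥ λ₂ ≥ ⋯`. -/
def sparts {n : ℕ} (l : n.Partition) : List ℕ := l.parts.sort (· ≥ ·)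

/-- The length `ℓ(λ)`, the number of (nonzero) parts. -/
def len {n : ℕ} (l : n.Partition) : ℕ := Multiset.card l.parts

/-- Partial sum `λ₁ + ⋯ + λ_i`. -/
def psumTo {n : ℕ} (l : n.Partition) (i : ℕ) : ℕ := ((sparts l).take i).sum

/-- Dominance order: `domLE μ λ` means `μ ≤ λ`. -/
def domLE {n : ℕ} (μ l : n.Partition) : Prop := ∀ i, psumTo μ i ≤ psumTo l i

/-- Reverse lexicographic order: `revLexLT μ λ` means `μ <^L λ`. -/
def revLexLT {n : ℕ} (μ l : n.Partition) : Prop := List.Lex (· < ·) (sparts μ) (sparts l)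

/-- `m(λ)! = m₁! m₂! ⋯`, the product of factorials of multiplicities. -/
def mfact (m : Multiset ℕ) : ℕ := ∏ k ∈ m.toFinset, (m.count k).factorial

/-- `z_λ = ∏_i i^{m_i} m_i!`. -/
def zee (m : Multiset ℕ) : ℕ := m.prod * mfact m

/-- `p_λ = p_{λ₁} ⋯ p_{λ_ℓ}`. -/
noncomputable def pProd (m : Multiset ℕ) : SymF := (m.map pvar).prod

/-- One-row symmetric function `Q_n(t) = Σ_{λ⊢n} t^{-ℓ(λ)} z_λ⁻¹ p_λ` with parameter `t`. -/
noncomputable def QrowT (t : F) (n : ℕ) : SymF :=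
  ∑ l : n.Partition, ((t ^ len l)⁻¹ * ((zee l.parts : F))⁻¹) • pProd l.parts

/-- The one-row Jack function `Q_n(α)`. -/
noncomputable def Qrow : ℕ → SymF := QrowT al

/-- `Q_n(α)` for integer index, with `Q_n = 0` for `n < 0`. -/
noncomputable def QrowZ (n : ℤ) : SymF := if 0 ≤ n then Qrow n.toNat else 0

/-- Generalized homogeneous symmetric function `q_λ(α) = Q_{λ₁}(α) ⋯ Q_{λ_ℓ}(α)`. -/
noncomputable def qgen (m : Multiset ℕ) : SymF := (m.map Qrow).prod

/-- The value `⟨p_λ, p_λ⟩ = z_λ t^{ℓ(λ)}` read off from the exponent of a monomial in the `p`'s. -/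
noncomputable def zex (t : F) (d : ℕ+ →₀ ℕ) : F :=
  (∏ k ∈ d.support, ((k : ℕ) : F) ^ d k * ((d k).factorial : F)) * t ^ (∑ k ∈ d.support, d k)

/-- The inner product with parameter `t` making `⟨p_λ, p_μ⟩ = δ_{λμ} t^{ℓ(λ)} z_λ`. -/
noncomputable def jipT (t : F) (f g : SymF) : F :=
  ∑ d ∈ f.support, f.coeff d * g.coeff d * zex t d

/-- The Jack inner product: `⟨p_λ, p_μ⟩ = δ_{λμ} α^{ℓ(λ)} z_λ`. -/
noncomputable def jip : SymF → SymF → F := jipT al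

/-- The monomial symmetric function `m_λ`, expressed in the power sums via Möbius
inversion over set partitions of the `ℓ(λ)` parts:
`m_λ = m(λ)!⁻¹ Σ_π (∏_{B∈π} (−1)^{|B|−1}(|B|−1)!) p_{λ_π}`. -/
noncomputable def msym {n : ℕ} (l : n.Partition) : SymF :=
  ((mfact l.parts : F))⁻¹ •
    ∑ P : Finpartition (Finset.univ : Finset (Fin (len l))),
      (∏ B ∈ P.parts, ((-1 : F) ^ (B.card - 1) * ((B.card - 1).factorial : F))) •
        pProd (P.parts.val.map fun B : Finset (Fin (len l)) => ∑ i ∈ B, (sparts l).getD (i : ℕ) 0)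

/-- Strict dominance `μ < λ`. -/
def sdomLT {n : ℕ} (μ l : n.Partition) : Prop := domLE μ l ∧ μ ≠ l

/-- A family `(f λ)_λ` of symmetric functions indexed by partitions of `n` is the family of
Jack functions if each `f λ = m_λ + (lower order terms in dominance order)` and the family
is pairwise orthogonal for the Jack inner product. -/
def IsJackFamily {n : ℕ} (f : n.Partition → SymF) : Prop :=
  (∀ l, ∃ c : n.Partition → F,
    f l = msym l + ∑ μ ∈ Finset.univ.filter fun μ => sdomLT μ l, c μ • msym μ) ∧
  ∀ l μ, l ≠ μ → jip (f l) (f μ) = 0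

/-- The Jack symmetric function `P_λ(α)`. -/
noncomputable def Pjack {n : ℕ} (l : n.Partition) : SymF :=
  if h : ∃! f : n.Partition → SymF, IsJackFamily f then h.choose l else 0

/-- The dual Jack function `Q_λ(α) = ⟨P_λ, P_λ⟩⁻¹ P_λ(α)`. -/
noncomputable def Qjack {n : ℕ} (l : n.Partition) : SymF :=
  (jip (Pjack l) (Pjack l))⁻¹ • Pjack l

/-- `λ'_c`, the number of parts of `λ` that are `≥ c`. -/
def conjLen {n : ℕ} (l : n.Partition) (c : ℕ) : ℕ :=
  Multiset.card (l.parts.filter fun a => c ≤ a)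

/-- The lower hook product `h_*^λ(λ) = ∏_{s∈λ} (α(λ_i − j) + (λ'_j − i + 1))`. -/
noncomputable def lowerHookProd {n : ℕ} (l : n.Partition) : F :=
  ∏ i ∈ Finset.range (len l), ∏ j ∈ Finset.range ((sparts l).getD i 0),
    (al * (((sparts l).getD i 0 : F) - ((j : F) + 1)) + ((conjLen l (j + 1) : F) - (i : F)))

/-- The Jack function `J_λ(α) = h_*^λ(λ) P_λ(α)`. -/
noncomputable def Jjack {n : ℕ} (l : n.Partition) : SymF := lowerHookProd l • Pjack l

/-- `Σ_i λ_i²`. -/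
def sqSum {n : ℕ} (l : n.Partition) : ℕ := (l.parts.map fun a => a * a).sum

/-- `Σ_i i·λ_i` (with `i` running from 1 to `ℓ(λ)`). -/
def iSum {n : ℕ} (l : n.Partition) : ℕ :=
  ((sparts l).zipIdx.map fun x => (x.2 + 1) * x.1).sum

/-- The eigenvalue `e_λ(α) = α² Σ λ_i² + α(|λ| − 2 Σ i λ_i)`. -/
noncomputable def eig {n : ℕ} (l : n.Partition) : F :=
  al ^ 2 * (sqSum l : F) + al * ((n : F) - 2 * (iSum l : F))

/-- The eigenvalue `e'_λ(α) = (α/2) Σ λ_i² − Σ i λ_i`. -/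
noncomputable def eig' {n : ℕ} (l : n.Partition) : F :=
  al * (sqSum l : F) / 2 - (iSum l : F)

/-- Result of moving `k` squares from a part `b` to a part `a` (dropping a zero part). -/
def moveUpM (m : Multiset ℕ) (a b k : ℕ) : Multiset ℕ :=
  ((m.erase a).erase b + {a + k}) + (if b - k = 0 then 0 else {b - k})

/-- `μ` is obtained from `λ` by the moving up operator `r_j^i(k)` acting on parts with
values `a = λ_i ≥ b = λ_j` (`i < j`). -/
def IsMoveAt {n : ℕ} (l μ : n.Partition) (a b k : ℕ) : Prop :=
  b ≤ a ∧ a ∈ l.parts ∧ b ∈ l.parts.erase a ∧ 0 < k ∧ k ≤ b ∧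
    μ.parts = moveUpM l.parts a b k

/-- `μ ∈ M^*(λ)`: `μ` is a moving up of `λ`. -/
def IsMoveUp {n : ℕ} (l μ : n.Partition) : Prop := ∃ a b k, IsMoveAt l μ a b k

/-- The coefficient `(1+δ_{λ_i λ_j})⁻¹ m_{λ_i}(λ)(m_{λ_j}(λ) − δ_{λ_i λ_j})(λ_i − λ_j + 2k)`. -/
noncomputable def rexpr (m : Multiset ℕ) (a b k : ℕ) : F :=
  (if a = b then (2 : F)⁻¹ else 1) * (m.count a : F) *
    ((m.count b : F) - if a = b then 1 else 0) * ((a : F) - (b : F) + 2 * (k : F))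

/-- The matrix coefficients `r_{λμ}` of Lemma 5.6: `r_{λλ} = e'_λ(α)`,
`r_{λμ} = (1+δ)⁻¹ m_{λ_i}(λ)(m_{λ_j}(λ)−δ)(λ_i−λ_j+2k)` if `μ = r_j^i(k)·λ`, and `0` otherwise. -/
noncomputable def rcoef {n : ℕ} (l μ : n.Partition) : F :=
  if l = μ then eig' l
  else ∑ a ∈ Finset.range (n + 1), ∑ b ∈ Finset.range (n + 1), ∑ k ∈ Finset.Icc 1 n,
    if IsMoveAt l μ a b k then rexpr l.parts a b k else 0

/-- The operator `D'(α) = (2α)⁻¹ D(α) − Σ_{k≥1} kα p_k ∂/∂p_k`. -/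
noncomputable def D'op (f : SymF) : SymF :=
  (2 * al)⁻¹ • Dop f - ∑ k ∈ Finset.Icc 1 (wdeg f), ((k : F) * al) • (pvar k * pdiff k f)

/-- `M_r = Σ_{i≥1} h_{−i} h_{i+r}` (again a locally finite sum). -/
noncomputable def Mop (r : ℕ) (f : SymF) : SymF :=
  ∑ i ∈ Finset.Icc 1 (wdeg f), pvar i * ((((i + r : ℕ) : F) * al) • pdiff (i + r) f)

/-- The operator `∏_k h_k^{d_k}` with `h_k = kα ∂/∂p_k`, for an exponent `d`
(the iterated partial derivatives commute, so the order of application is immaterial). -/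
noncomputable def hAnnPow (d : ℕ+ →₀ ℕ) (f : SymF) : SymF :=
  (∏ k ∈ d.support, (((k : ℕ) : F) * al) ^ d k) •
    (d.support.sort (· ≤ ·)).foldl
      (fun g k => (((MvPolynomial.pderiv k).toLinearMap : Module.End F SymF) ^ d k) g) f

/-- The adjoint, under the Jack inner product, of multiplication by `g`:
replace each `p_k` in `g` by `h_k = kα ∂/∂p_k`. -/
noncomputable def adjMul (g f : SymF) : SymF := ∑ d ∈ g.support, g.coeff d • hAnnPow d f

/-- `f` is a moving up filtration with `s` steps. -/
def IsFilt {n : ℕ} (s : ℕ) (f : Fin (s + 1) → n.Partition) : Prop :=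
  ∀ i : Fin s, IsMoveUp (f i.castSucc) (f i.succ)

/-- `f^λ(δ) = ∏_i r_{λ^i λ^{i+1}} / (e'_λ − e'_{λ^i})`. -/
noncomputable def fTop {n : ℕ} (lam : n.Partition) (s : ℕ) (f : Fin (s + 1) → n.Partition) : F :=
  ∏ i : Fin s, rcoef (f i.castSucc) (f i.succ) / (eig' lam - eig' (f i.castSucc))

/-- `f_μ(δ) = ∏_i r_{λ^i λ^{i+1}} / (e'_μ − e'_{λ^{i+1}})`. -/
noncomputable def fBot {n : ℕ} (m : n.Partition) (s : ℕ) (f : Fin (s + 1) → n.Partition) : F :=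
  ∏ i : Fin s, rcoef (f i.castSucc) (f i.succ) / (eig' m - eig' (f i.succ))

/-- The two-row partition `(a, b)` (as a partition of `N = a + b`). -/
def twoRowP (N a b : ℕ) (h : a + b = N) : N.Partition :=
  Nat.Partition.ofSums N {a, b} (by simpa using h)

/-!
Write `h_k = kα ∂/∂p_k`. Differentiating the partition expansion of `Q_n` term by term gives
`h_k Q_n = Q_{n-k}` (with `Q_m = 0` for `m < 0`), and Euler's identity for the grading
`deg p_k = k` then yields `∑_{k ≥ 1} p_k Q_{n-k} = nα Q_n`. Applied to `Q_n`, each of the three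
parts of `D(α)` becomes a combination of the `p_s Q_{n-s}`, `1 ≤ s ≤ n`: the first with
coefficient `(n - s)α`, the second with `s - 1` (the number of ways to write `s = i + j`), the
third with `s(α - 1)`. These add up to `nα - 1` for every `s`, so
`D(α) Q_n = (nα - 1) ∑_s p_s Q_{n-s} = (nα - 1) nα Q_n`.
-/

open Finset

lemma al_ne_zero : al ≠ 0 := RatFunc.X_ne_zero

lemma pvar_of_pos {k : ℕ} (hk : 0 < k) : pvar k = X (⟨k, hk⟩ : ℕ+) := dif_pos hk

lemma pdiff_of_pos {k : ℕ} (hk : 0 < k) (f : SymF) : pdiff k f = pderiv (⟨k, hk⟩ : ℕ+) f := by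
  have h : pdiff k = (pderiv (⟨k, hk⟩ : ℕ+)).toLinearMap := dif_pos hk
  rw [h]
  rfl

lemma pdiff_mul {k : ℕ} (hk : 0 < k) (f g : SymF) :
    pdiff k (f * g) = f * pdiff k g + pdiff k f * g := by
  rw [pdiff_of_pos hk, pdiff_of_pos hk, pdiff_of_pos hk]
  erw [Derivation.leibniz, smul_eq_mul, smul_eq_mul, mul_comm g]
  rfl

lemma pdiff_pvar {k a : ℕ} (hk : 0 < k) (ha : 0 < a) :
    pdiff k (pvar a) = if a = k then 1 else 0 := by
  rw [pdiff_of_pos hk, pvar_of_pos ha, pderiv_X]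
  by_cases h : a = k
  · subst h; simp only [Pi.single_eq_same, ↓reduceIte]; rfl
  · simp only [ne_eq, Subtype.mk.injEq, h, not_false_eq_true, Pi.single_eq_of_ne, ↓reduceIte]
    rfl

lemma pProd_cons (a : ℕ) (m : Multiset ℕ) : pProd (a ::ₘ m) = pvar a * pProd m := by
  simp [pProd]

lemma pdiff_pProd {k : ℕ} (hk : 0 < k) {m : Multiset ℕ} (hm : ∀ a ∈ m, 0 < a) :
    pdiff k (pProd m) = (m.count k : F) • pProd (m.erase k) := by
  induction m using Multiset.induction_on with
  | empty =>
    simp only [pProd, Multiset.map_zero, Multiset.prod_zero, pdiff_of_pos hk,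
      Multiset.count_zero, Nat.cast_zero, zero_smul]
    exact (pderiv (⟨k, hk⟩ : ℕ+)).map_one_eq_zero
  | cons a m ih =>
    rw [pProd_cons, pdiff_mul hk, ih fun b hb => hm b (Multiset.mem_cons_of_mem hb),
      pdiff_pvar hk (hm a (Multiset.mem_cons_self a m))]
    by_cases h : a = k
    · subst h
      by_cases ha : a ∈ m
      · rw [mul_smul_comm, ← pProd_cons, Multiset.cons_erase ha]
        simp [add_smul, add_comm]
      · simp [Multiset.count_eq_zero_of_notMem ha]
    · rw [Multiset.erase_cons_tail m h, Multiset.count_cons_of_ne (Ne.symm h), pProd_cons]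
      simp [h]

lemma pvar_mul_pdiff_pProd {k : ℕ} (hk : 0 < k) {m : Multiset ℕ} (hm : ∀ a ∈ m, 0 < a) :
    pvar k * pdiff k (pProd m) = (m.count k : F) • pProd m := by
  rw [pdiff_pProd hk hm, mul_smul_comm, ← pProd_cons]
  by_cases h : k ∈ m
  · rw [Multiset.cons_erase h]
  · simp [Multiset.count_eq_zero_of_notMem h]

lemma mfact_cons (a : ℕ) (m : Multiset ℕ) : mfact (a ::ₘ m) = (m.count a + 1) * mfact m := by
  have hsub : m.toFinset ⊆ (a ::ₘ m).toFinset := by simp [subset_insert]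
  have ha : a ∈ (a ::ₘ m).toFinset := by simp
  have hm : mfact m = ∏ k ∈ (a ::ₘ m).toFinset, (m.count k).factorial :=
    prod_subset hsub fun k _ hk => by simp [Multiset.count_eq_zero.2 (by simpa using hk)]
  rw [mfact, hm, ← mul_prod_erase _ _ ha, ← mul_prod_erase _ _ ha,
    Multiset.count_cons_self, Nat.factorial_succ, mul_assoc]
  congr 2
  exact prod_congr rfl fun k hk => by rw [Multiset.count_cons_of_ne (ne_of_mem_erase hk)]

lemma zee_cons (a : ℕ) (m : Multiset ℕ) : zee (a ::ₘ m) = a * (m.count a + 1) * zee m := by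
  rw [zee, zee, Multiset.prod_cons, mfact_cons]
  ring

lemma zee_pos {m : Multiset ℕ} (hm : ∀ a ∈ m, 0 < a) : 0 < zee m :=
  mul_pos (Multiset.prod_pos hm) (prod_pos fun _ _ => Nat.factorial_pos _)

def partCons {n k : ℕ} (hk : 0 < k) (hkn : k ≤ n) (μ : (n - k).Partition) : n.Partition where
  parts := k ::ₘ μ.parts
  parts_pos hi := (Multiset.mem_cons.1 hi).elim (· ▸ hk) μ.parts_pos
  parts_sum := by rw [Multiset.sum_cons, μ.parts_sum]; omega

def partErase {n k : ℕ} (l : n.Partition) (hk : k ∈ l.parts) : (n - k).Partition where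
  parts := l.parts.erase k
  parts_pos hi := l.parts_pos (Multiset.mem_of_mem_erase hi)
  parts_sum := by
    have h := congrArg Multiset.sum (Multiset.cons_erase hk)
    rw [Multiset.sum_cons, l.parts_sum] at h
    omega

lemma le_of_mem_parts {n a : ℕ} (l : n.Partition) (ha : a ∈ l.parts) : a ≤ n :=
  l.parts_sum ▸ Multiset.le_sum_of_mem ha

lemma QrowT_coeff_erase {t : F} (ht : t ≠ 0) {k : ℕ} {m : Multiset ℕ} (hm : ∀ a ∈ m, 0 < a)
    (hkm : k ∈ m) :
    (k : F) * t * ((t ^ Multiset.card m)⁻¹ * (zee m : F)⁻¹ * (m.count k : F))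
      = (t ^ Multiset.card (m.erase k))⁻¹ * (zee (m.erase k) : F)⁻¹ := by
  obtain ⟨e, rfl⟩ := Multiset.exists_cons_of_mem hkm
  have hk : (k : F) ≠ 0 := Nat.cast_ne_zero.2 (hm k (Multiset.mem_cons_self k e)).ne'
  have he : (zee e : F) ≠ 0 :=
    Nat.cast_ne_zero.2 (zee_pos fun a ha => hm a (Multiset.mem_cons_of_mem ha)).ne'
  rw [Multiset.erase_cons_head, zee_cons, Multiset.card_cons, Multiset.count_cons_self]
  push_cast
  field_simp
  ring

lemma pdiff_QrowT_of_lt {t : F} {k n : ℕ} (h : n < k) : pdiff k (QrowT t n) = 0 := by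
  rw [QrowT, map_sum]
  refine sum_eq_zero fun l _ => ?_
  have hkl : l.parts.count k = 0 :=
    Multiset.count_eq_zero.2 fun hk => absurd (le_of_mem_parts l hk) (by omega)
  rw [map_smul, pdiff_pProd (by omega) fun a ha => l.parts_pos ha, hkl, Nat.cast_zero, zero_smul,
    smul_zero]

theorem smul_pdiff_QrowT {t : F} (ht : t ≠ 0) {k n : ℕ} (hk : 0 < k) (hkn : k ≤ n) :
    ((k : F) * t) • pdiff k (QrowT t n) = QrowT t (n - k) := by
  have hpos (l : n.Partition) : ∀ a ∈ l.parts, 0 < a := fun a ha => l.parts_pos ha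
  unfold QrowT
  simp only [map_sum, smul_sum, map_smul, pdiff_pProd hk (hpos _), smul_smul]
  rw [← sum_filter_of_ne (p := fun l : n.Partition => k ∈ l.parts)
    fun l _ hl => by_contra fun hkl => hl ?_]
  · refine sum_bij' (fun l hl => partErase l (mem_filter.1 hl).2)
      (fun μ _ => partCons hk hkn μ) (fun _ _ => mem_univ _)
      (fun μ _ => mem_filter.2 ⟨mem_univ _, Multiset.mem_cons_self k _⟩)
      (fun l hl => Nat.Partition.ext (Multiset.cons_erase (mem_filter.1 hl).2))
      (fun μ _ => Nat.Partition.ext (Multiset.erase_cons_head k μ.parts)) fun l hl => ?_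
    exact congrArg (· • pProd (l.parts.erase k))
      (QrowT_coeff_erase ht (hpos l) (mem_filter.1 hl).2)
  · rw [Multiset.count_eq_zero_of_notMem hkl, Nat.cast_zero, mul_zero, mul_zero, zero_smul]

lemma sum_smul_pvar_mul_pdiff_pProd {m : Multiset ℕ} (hm : ∀ a ∈ m, 0 < a) {N : ℕ}
    (hN : m.sum ≤ N) :
    ∑ k ∈ Icc 1 N, (k : F) • (pvar k * pdiff k (pProd m)) = (m.sum : F) • pProd m := by
  rw [sum_congr rfl fun k hk => by
    rw [pvar_mul_pdiff_pProd (mem_Icc.1 hk).1 hm, smul_smul], ← sum_smul]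
  congr 1
  have hsub : m.toFinset ⊆ Icc 1 N := fun a ha => by
    rw [Multiset.mem_toFinset] at ha
    exact mem_Icc.2 ⟨hm a ha, (Multiset.le_sum_of_mem ha).trans hN⟩
  rw [sum_multiset_count m, Nat.cast_sum]
  refine (sum_subset hsub fun a _ ha => ?_).symm.trans (sum_congr rfl fun a _ => ?_)
  · simp [Multiset.count_eq_zero.2 (by simpa using ha)]
  · simp [mul_comm]

lemma sum_smul_pvar_mul_pdiff_QrowT (t : F) {n N : ℕ} (hN : n ≤ N) :
    ∑ k ∈ Icc 1 N, (k : F) • (pvar k * pdiff k (QrowT t n)) = (n : F) • QrowT t n := by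
  unfold QrowT
  simp only [map_sum, map_smul, mul_sum, mul_smul_comm, smul_sum]
  rw [sum_comm]
  refine sum_congr rfl fun l _ => ?_
  simp only [smul_comm (_ : F) ((t ^ len l)⁻¹ * _)]
  rw [← smul_sum, sum_smul_pvar_mul_pdiff_pProd (fun a ha => l.parts_pos ha)
    (l.parts_sum.trans_le hN), l.parts_sum, smul_comm]

lemma isWeightedHomogeneous_pProd {m : Multiset ℕ} (hm : ∀ a ∈ m, 0 < a) :
    IsWeightedHomogeneous wfun (pProd m) m.sum := by
  induction m using Multiset.induction_on with
  | empty => exact isWeightedHomogeneous_one F wfun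
  | cons a m ih =>
    rw [pProd_cons, Multiset.sum_cons, pvar_of_pos (hm a (Multiset.mem_cons_self a m))]
    exact (isWeightedHomogeneous_X F wfun _).mul (ih fun b hb => hm b (Multiset.mem_cons_of_mem hb))

lemma isWeightedHomogeneous_QrowT (t : F) (n : ℕ) : IsWeightedHomogeneous wfun (QrowT t n) n :=
  Submodule.sum_mem (weightedHomogeneousSubmodule F wfun n) fun l _ =>
    Submodule.smul_mem _ _ <| by
      simpa [l.parts_sum] using isWeightedHomogeneous_pProd fun a ha => l.parts_pos ha

lemma wdeg_eq_of_isWeightedHomogeneous {f : SymF} {n : ℕ} (hf : IsWeightedHomogeneous wfun f n)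
    (hf0 : f ≠ 0) : wdeg f = n := by
  rw [wdeg, sup_congr rfl (g := fun _ => n) fun d hd => ?_,
    sup_const (support_nonempty.2 hf0)]
  rw [← hf (mem_support_iff.1 hd), Finsupp.weight_apply]
  simp [wfun, mul_comm]

lemma QrowT_zero (t : F) : QrowT t 0 = 1 := by
  simp [QrowT, len, zee, mfact, pProd]

lemma QrowT_ne_zero {t : F} (ht : t ≠ 0) (n : ℕ) : QrowT t n ≠ 0 := by
  cases n with
  | zero => simp [QrowT_zero]
  | succ n =>
    intro h
    have h1 := smul_pdiff_QrowT ht n.succ_pos le_rfl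
    rw [h, map_zero, smul_zero, Nat.sub_self, QrowT_zero] at h1
    exact zero_ne_one h1

lemma wdeg_Qrow (n : ℕ) : wdeg (Qrow n) = n :=
  wdeg_eq_of_isWeightedHomogeneous (isWeightedHomogeneous_QrowT al n) (QrowT_ne_zero al_ne_zero n)

lemma QrowZ_natCast (n : ℕ) : QrowZ n = Qrow n := by
  simp [QrowZ]

lemma QrowZ_of_neg {m : ℤ} (hm : m < 0) : QrowZ m = 0 :=
  if_neg (by omega)

lemma smul_pdiff_QrowZ {k : ℕ} (hk : 0 < k) (m : ℤ) :
    ((k : F) * al) • pdiff k (QrowZ m) = QrowZ (m - k) := by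
  rcases lt_or_ge m 0 with hm | hm
  · rw [QrowZ_of_neg hm, QrowZ_of_neg (by omega), map_zero, smul_zero]
  obtain ⟨n, rfl⟩ := Int.eq_ofNat_of_zero_le hm
  rw [QrowZ_natCast, Qrow]
  rcases le_or_gt k n with hkn | hnk
  · rw [smul_pdiff_QrowT al_ne_zero hk hkn, ← Nat.cast_sub hkn, QrowZ_natCast, Qrow]
  · rw [pdiff_QrowT_of_lt hnk, smul_zero, QrowZ_of_neg (by omega)]

lemma sum_pvar_mul_QrowZ (m : ℤ) {N : ℕ} (hmN : m ≤ N) :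
    ∑ k ∈ Icc 1 N, pvar k * QrowZ (m - k) = ((m : F) * al) • QrowZ m := by
  rcases lt_or_ge m 0 with hm | hm
  · rw [QrowZ_of_neg hm, smul_zero]
    exact sum_eq_zero fun k _ => by rw [QrowZ_of_neg (by omega), mul_zero]
  obtain ⟨n, rfl⟩ := Int.eq_ofNat_of_zero_le hm
  calc ∑ k ∈ Icc 1 N, pvar k * QrowZ (n - k)
      = al • ∑ k ∈ Icc 1 N, (k : F) • (pvar k * pdiff k (QrowZ n)) := by
        rw [smul_sum]
        refine sum_congr rfl fun k hk => ?_
        rw [← smul_pdiff_QrowZ (mem_Icc.1 hk).1, mul_smul_comm, smul_smul, mul_comm]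
    _ = ((n : ℤ) * al : F) • QrowZ n := by
        rw [QrowZ_natCast, Qrow, sum_smul_pvar_mul_pdiff_QrowT al (by omega), smul_smul,
          Int.cast_natCast, mul_comm]

lemma sum_Icc_sum_Icc_add {M : Type*} [AddCommMonoid M] (n : ℕ) (f : ℕ → M)
    (hf : ∀ s, n < s → f s = 0) :
    ∑ i ∈ Icc 1 n, ∑ j ∈ Icc 1 n, f (i + j) = ∑ s ∈ Icc 1 n, (s - 1) • f s := by
  have hshift (i : ℕ) : ∑ j ∈ Icc 1 n, f (i + j) = ∑ s ∈ Icc (i + 1) n, f s := by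
    rw [show ∑ j ∈ Icc 1 n, f (i + j) = ∑ s ∈ Icc (i + 1) (i + n), f s by
      rw [← map_add_left_Icc, sum_map]; rfl]
    refine (sum_subset (Icc_subset_Icc le_rfl (by omega)) fun s hs hs' => hf s ?_).symm
    simp only [mem_Icc] at hs hs'
    omega
  rw [sum_congr rfl fun i _ => hshift i, sum_comm' (t' := Icc 1 n)
    (s' := fun s => Icc 1 (s - 1)) fun i s => by simp only [mem_Icc]; omega]
  simp [sum_const, Nat.card_Icc]

lemma sum_cut_QrowZ (n : ℕ) :
    ∑ i ∈ Icc 1 n, ∑ j ∈ Icc 1 n,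
        (((i + j : ℕ) : F) * al) • (pvar i * pvar j * pdiff (i + j) (QrowZ n))
      = ∑ s ∈ Icc 1 n, (((n : F) - s) * al) • (pvar s * QrowZ (n - s)) := by
  refine sum_congr rfl fun i hi => ?_
  have hi' := mem_Icc.1 hi
  calc ∑ j ∈ Icc 1 n, (((i + j : ℕ) : F) * al) • (pvar i * pvar j * pdiff (i + j) (QrowZ n))
      = pvar i * ∑ j ∈ Icc 1 n, pvar j * QrowZ ((n - i : ℤ) - j) := by
        rw [mul_sum]
        refine sum_congr rfl fun j _ => ?_
        rw [← mul_smul_comm, smul_pdiff_QrowZ (by omega), mul_assoc, sub_sub, Nat.cast_add]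
    _ = _ := by
        rw [sum_pvar_mul_QrowZ _ (by omega), mul_smul_comm]
        push_cast
        rfl

lemma sum_join_QrowZ (n : ℕ) :
    ∑ i ∈ Icc 1 n, ∑ j ∈ Icc 1 n,
        (((i * j : ℕ) : F) * al ^ 2) • (pvar (i + j) * pdiff i (pdiff j (QrowZ n)))
      = ∑ s ∈ Icc 1 n, ((s : F) - 1) • (pvar s * QrowZ (n - s)) := by
  have hterm (i j : ℕ) (hi : 0 < i) (hj : 0 < j) :
      (((i * j : ℕ) : F) * al ^ 2) • (pvar (i + j) * pdiff i (pdiff j (QrowZ n)))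
        = pvar (i + j) * QrowZ (n - (i + j : ℕ)) := by
    rw [← mul_smul_comm, show (((i * j : ℕ) : F) * al ^ 2) = ((i : F) * al) * ((j : F) * al) by
      push_cast; ring, mul_smul, ← map_smul, smul_pdiff_QrowZ hj, smul_pdiff_QrowZ hi, sub_sub,
      add_comm (j : ℤ), Nat.cast_add]
  rw [sum_congr rfl fun i hi => sum_congr rfl fun j hj =>
      hterm i j (mem_Icc.1 hi).1 (mem_Icc.1 hj).1,
    sum_Icc_sum_Icc_add n (fun s => pvar s * QrowZ (n - s))
      fun s hs => by rw [QrowZ_of_neg (by omega), mul_zero]]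
  refine sum_congr rfl fun s hs => ?_
  rw [← Nat.cast_smul_eq_nsmul F, Nat.cast_sub (mem_Icc.1 hs).1, Nat.cast_one]

lemma sum_sq_smul_pvar_mul_pdiff_QrowZ (n : ℕ) :
    ∑ k ∈ Icc 1 n, ((k : F) ^ 2) • (pvar k * pdiff k (QrowZ n))
      = ∑ s ∈ Icc 1 n, ((s : F) / al) • (pvar s * QrowZ (n - s)) := by
  refine sum_congr rfl fun k hk => ?_
  rw [← smul_pdiff_QrowZ (mem_Icc.1 hk).1, mul_smul_comm, smul_smul]
  congr 1
  field_simp [al_ne_zero]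

theorem statement0_general (n : ℕ) :
    Dop (Qrow n) = (al ^ 2 * (n : F) ^ 2 - (n : F) * al) • Qrow n := by
  rw [Dop, wdeg_Qrow, ← QrowZ_natCast]
  simp only [sum_add_distrib]
  rw [sum_cut_QrowZ, sum_join_QrowZ, sum_sq_smul_pvar_mul_pdiff_QrowZ, smul_sum,
    ← sum_add_distrib, ← sum_add_distrib]
  have hcoeff (s : F) :
      ((n : F) - s) * al + (s - 1) + al * (al - 1) * (s / al) = (n : F) * al - 1 := by
    field_simp [al_ne_zero]
    ring
  simp only [smul_smul, ← add_smul, hcoeff, ← smul_sum]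
  rw [sum_pvar_mul_QrowZ n le_rfl, smul_smul, Int.cast_natCast]
  congr 1
  ring

/-- For every `n ≥ 1`, `D(α)·Q_n(α) = (α²n² − nα)·Q_n(α)`. -/
theorem statement0 (n : ℕ) (hn : 1 ≤ n) :
    Dop (Qrow n) = (al ^ 2 * (n : F) ^ 2 - (n : F) * al) • Qrow n :=
  statement0_general n

end JackPaper
end

section
/- For every integer n ≥ 1, the power sum p_n expands in the basis {q_μ(α) : μ ⊢ n} as p_n = Σ_{μ ⊢ n} a_{n,μ} q_μ(α) with a_{n,μ} = nα·(−1)^{ℓ(μ)−1}·(ℓ(μ)−1)!/m(μ)!. -/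
open scoped BigOperators Classical
open MvPolynomial

noncomputable section JackPaper

/-!
Newton's identity `nα Q_n = Σ_{k=1}^n p_k Q_{n-k}` comes from splitting off one part `j` of each
partition `λ ⊢ n`: as `z_λ = j m_j(λ) z_{λ∖j}`, the coefficient of `p_λ` on the right collects
`Σ_j j m_j(λ) = |λ| = n`. Solving it for `p_n` and expanding every `p_k`, `k < n`, by induction
gives `p_n = nα q_{(n)} - Σ_λ (Σ_j a_{n-j, λ∖j}) q_λ`, where `j` runs over the distinct parts of
`λ`. Since `m(λ)! = m_j(λ) m(λ∖j)!` and `Σ_j (n - j) m_j(λ) = n (ℓ(λ) - 1)`, the inner sum is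
`-a_{n,λ}` whenever `ℓ(λ) ≥ 2`.
-/

namespace JackPaper

lemma mfact_pos (m : Multiset ℕ) : 0 < mfact m :=
  Finset.prod_pos fun _ _ => Nat.factorial_pos _

lemma mfact_singleton (a : ℕ) : mfact {a} = 1 := by
  simp [mfact]

lemma mfact_erase {m : Multiset ℕ} {a : ℕ} (h : a ∈ m) :
    mfact m = m.count a * mfact (m.erase a) := by
  have hsub : (m.erase a).toFinset ⊆ m.toFinset := Multiset.toFinset_subset.2 (m.erase_subset a)
  have ha : a ∈ m.toFinset := Multiset.mem_toFinset.2 h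
  unfold mfact
  rw [Finset.prod_subset hsub fun x _ hx => by
      rw [Multiset.count_eq_zero.2 (Multiset.mem_toFinset.not.1 hx), Nat.factorial_zero],
    ← Finset.mul_prod_erase _ _ ha, ← Finset.mul_prod_erase _ _ ha, ← mul_assoc,
    Multiset.count_erase_self, Nat.mul_factorial_pred (Multiset.count_ne_zero.2 h)]
  congr 1
  refine Finset.prod_congr rfl fun x hx => ?_
  rw [Multiset.count_erase_of_ne (Finset.ne_of_mem_erase hx)]

lemma zee_pos {m : Multiset ℕ} (hm : ∀ i ∈ m, 0 < i) : 0 < zee m :=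
  Nat.mul_pos (Multiset.prod_pos hm) (mfact_pos m)

lemma zee_erase {m : Multiset ℕ} {a : ℕ} (h : a ∈ m) :
    zee m = a * m.count a * zee (m.erase a) := by
  rw [zee, zee, mfact_erase h, ← Multiset.prod_erase h]
  ring

lemma sum_toFinset_mul_count (m : Multiset ℕ) : ∑ a ∈ m.toFinset, a * m.count a = m.sum := by
  rw [Finset.sum_multiset_count]
  exact Finset.sum_congr rfl fun a _ => by rw [smul_eq_mul, mul_comm]

lemma sum_Icc_eq_sum_Ico_add {M : Type*} [AddCommMonoid M] {n : ℕ} (hn : 1 ≤ n) (f : ℕ → M) :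
    ∑ k ∈ Finset.Icc 1 n, f k = ∑ k ∈ Finset.Ico 1 n, f k + f n := by
  rw [← Finset.Ico_add_one_right_eq_Icc, Finset.sum_Ico_succ_top hn]

theorem sum_sum_parts_erase_eq {M : Type*} [AddCommMonoid M] (n : ℕ) (g : ℕ → Multiset ℕ → M) :
    ∑ l : n.Partition, ∑ j ∈ l.parts.toFinset, g j (l.parts.erase j) =
      ∑ j ∈ Finset.Icc 1 n, ∑ ν : (n - j).Partition, g j ν.parts := by
  rw [Finset.sum_comm' (t' := Finset.Icc 1 n) (s' := fun j => {l | j ∈ l.parts}) fun l j => by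
    simp only [Finset.mem_univ, Multiset.mem_toFinset, true_and, Finset.mem_filter,
      Finset.mem_Icc]
    exact ⟨fun h => ⟨h, l.parts_pos h, l.le_of_mem_parts h⟩, fun h => h.1⟩]
  refine Finset.sum_congr rfl fun j hj => ?_
  obtain ⟨hj1, hjn⟩ := Finset.mem_Icc.1 hj
  rw [Finset.sum_subtype (p := fun l : n.Partition => j ∈ l.parts) _ fun l => by simp]
  exact Fintype.sum_equiv (Nat.Partition.partitionWithPartEquiv hj1 hjn) _ _ fun l => by simp

lemma al_ne_zero : al ≠ 0 := RatFunc.X_ne_zero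

lemma pProd_cons (a : ℕ) (m : Multiset ℕ) : pProd (a ::ₘ m) = pvar a * pProd m := by
  rw [pProd, Multiset.map_cons, Multiset.prod_cons, pProd]

lemma qgen_cons (a : ℕ) (m : Multiset ℕ) : qgen (a ::ₘ m) = Qrow a * qgen m := by
  rw [qgen, Multiset.map_cons, Multiset.prod_cons, qgen]

def zInv (t : F) (m : Multiset ℕ) : F := (t ^ Multiset.card m)⁻¹ * (zee m : F)⁻¹

lemma QrowT_eq_sum_zInv (t : F) (n : ℕ) :
    QrowT t n = ∑ l : n.Partition, zInv t l.parts • pProd l.parts := rfl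

lemma Qrow_zero : Qrow 0 = 1 := by
  simp [Qrow, QrowT_eq_sum_zInv, zInv, zee, mfact, pProd]

lemma zInv_erase {t : F} (ht : t ≠ 0) {m : Multiset ℕ} (hm : ∀ i ∈ m, 0 < i) {j : ℕ}
    (hj : j ∈ m) : zInv t (m.erase j) = t * (j * m.count j : ℕ) * zInv t m := by
  have hj0 : (j : F) ≠ 0 := Nat.cast_ne_zero.2 (hm j hj).ne'
  have hc : (m.count j : F) ≠ 0 := Nat.cast_ne_zero.2 (Multiset.count_ne_zero.2 hj)
  have hz : (zee (m.erase j) : F) ≠ 0 :=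
    Nat.cast_ne_zero.2 (zee_pos fun i hi => hm i (Multiset.mem_of_mem_erase hi)).ne'
  rw [zInv, zInv, zee_erase hj, ← Multiset.card_erase_add_one hj, pow_succ]
  push_cast
  field_simp

lemma sum_zInv_erase {t : F} (ht : t ≠ 0) {m : Multiset ℕ} (hm : ∀ i ∈ m, 0 < i) :
    ∑ j ∈ m.toFinset, zInv t (m.erase j) = t * m.sum * zInv t m := by
  rw [Finset.sum_congr rfl fun j hj => zInv_erase ht hm (Multiset.mem_toFinset.1 hj),
    ← Finset.sum_mul, ← Finset.mul_sum, ← Nat.cast_sum, sum_toFinset_mul_count]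

theorem smul_QrowT_eq_sum {t : F} (ht : t ≠ 0) (n : ℕ) :
    ((n : F) * t) • QrowT t n = ∑ k ∈ Finset.Icc 1 n, pvar k * QrowT t (n - k) := by
  have hexpand : ∀ k, pvar k * QrowT t (n - k) =
      ∑ ν : (n - k).Partition, zInv t ν.parts • pProd (k ::ₘ ν.parts) := fun k => by
    simp only [QrowT_eq_sum_zInv, Finset.mul_sum, mul_smul_comm, pProd_cons]
  rw [Finset.sum_congr rfl fun k _ => hexpand k,
    ← sum_sum_parts_erase_eq n fun j m => zInv t m • pProd (j ::ₘ m), QrowT_eq_sum_zInv,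
    Finset.smul_sum]
  refine Finset.sum_congr rfl fun l _ => ?_
  rw [Finset.sum_congr rfl fun j hj => by rw [Multiset.cons_erase (Multiset.mem_toFinset.1 hj)],
    ← Finset.sum_smul, sum_zInv_erase ht fun i => l.parts_pos, l.parts_sum, smul_smul, mul_comm t]

lemma pvar_eq_sub_sum {n : ℕ} (hn : 1 ≤ n) :
    pvar n = ((n : F) * al) • Qrow n - ∑ k ∈ Finset.Ico 1 n, pvar k * Qrow (n - k) := by
  rw [Qrow, smul_QrowT_eq_sum al_ne_zero, sum_Icc_eq_sum_Ico_add hn, Nat.sub_self,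
    ← Qrow, Qrow_zero, mul_one, add_sub_cancel_left]

def qgenCoeff (n : ℕ) (m : Multiset ℕ) : F :=
  (n : F) * al * (-1 : F) ^ (Multiset.card m - 1) * ((Multiset.card m - 1).factorial : F) /
    (mfact m : F)

lemma qgenCoeff_zero (m : Multiset ℕ) : qgenCoeff 0 m = 0 := by
  simp [qgenCoeff]

lemma qgenCoeff_singleton (n : ℕ) : qgenCoeff n {n} = (n : F) * al := by
  simp [qgenCoeff, mfact_singleton]

lemma qgenCoeff_sub_erase {m : Multiset ℕ} {s : ℕ} (hcard : Multiset.card m = s + 2) {j : ℕ}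
    (hj : j ∈ m) : qgenCoeff (m.sum - j) (m.erase j) =
      ((m.sum : F) - j) * m.count j * (al * (-1) ^ s * s.factorial / mfact m) := by
  have hc : (m.count j : F) ≠ 0 := Nat.cast_ne_zero.2 (Multiset.count_ne_zero.2 hj)
  have hmf : (mfact (m.erase j) : F) ≠ 0 := Nat.cast_ne_zero.2 (mfact_pos _).ne'
  rw [qgenCoeff, Multiset.card_erase_of_mem hj, hcard, show (s + 2).pred - 1 = s from rfl,
    mfact_erase hj, Nat.cast_sub (Multiset.le_sum_of_mem hj)]
  push_cast
  field_simp

lemma sum_qgenCoeff_sub_erase {m : Multiset ℕ} {s : ℕ} (hcard : Multiset.card m = s + 2) :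
    ∑ j ∈ m.toFinset, qgenCoeff (m.sum - j) (m.erase j) = -qgenCoeff m.sum m := by
  have hcount : ∑ j ∈ m.toFinset, ((m.sum : F) - j) * m.count j = m.sum * (s + 1) := by
    have hcard' := congrArg (Nat.cast (R := F)) (Multiset.toFinset_sum_count_eq m)
    have hsum := congrArg (Nat.cast (R := F)) (sum_toFinset_mul_count m)
    push_cast at hcard' hsum
    simp only [sub_mul, Finset.sum_sub_distrib, ← Finset.mul_sum, hcard', hsum, hcard]
    push_cast
    ring
  rw [Finset.sum_congr rfl fun j hj => qgenCoeff_sub_erase hcard (Multiset.mem_toFinset.1 hj),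
    ← Finset.sum_mul, hcount, qgenCoeff, hcard, show s + 2 - 1 = s + 1 from rfl, Nat.factorial_succ,
    pow_succ]
  push_cast
  ring

lemma two_le_card_parts {n : ℕ} (hn : n ≠ 0) {l : n.Partition}
    (hl : l ≠ Nat.Partition.indiscrete n) : 2 ≤ Multiset.card l.parts := by
  have h0 : Multiset.card l.parts ≠ 0 := fun h => by
    have := l.parts_sum
    rw [Multiset.card_eq_zero.1 h, Multiset.sum_zero] at this
    exact hn this.symm
  have h1 : Multiset.card l.parts ≠ 1 := fun h => by
    obtain ⟨a, ha⟩ := Multiset.card_eq_one.1 h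
    have hsum := l.parts_sum
    rw [ha, Multiset.sum_singleton] at hsum
    exact hl (Nat.Partition.ext (by rw [ha, hsum, Nat.Partition.indiscrete_parts hn]))
  omega

lemma qgenCoeff_eq_ite_sub_sum {n : ℕ} (hn : n ≠ 0) (l : n.Partition) :
    qgenCoeff n l.parts = (if l = Nat.Partition.indiscrete n then (n : F) * al else 0) -
      ∑ j ∈ l.parts.toFinset, qgenCoeff (n - j) (l.parts.erase j) := by
  by_cases hl : l = Nat.Partition.indiscrete n
  · subst hl
    simp [Nat.Partition.indiscrete_parts hn, qgenCoeff_singleton, qgenCoeff_zero]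
  · obtain ⟨s, hs⟩ := Nat.exists_eq_add_of_le' (two_le_card_parts hn hl)
    have hsum := sum_qgenCoeff_sub_erase hs
    rw [l.parts_sum] at hsum
    rw [if_neg hl, hsum, zero_sub, neg_neg]

lemma sum_pvar_mul_Qrow_eq {n : ℕ} (hn : 1 ≤ n)
    (ih : ∀ k ∈ Finset.Ico 1 n, pvar k = ∑ μ : k.Partition, qgenCoeff k μ.parts • qgen μ.parts) :
    ∑ k ∈ Finset.Ico 1 n, pvar k * Qrow (n - k) = ∑ l : n.Partition,
      (∑ j ∈ l.parts.toFinset, qgenCoeff (n - j) (l.parts.erase j)) • qgen l.parts := by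
  set G : ℕ → SymF := fun k =>
    ∑ μ : k.Partition, qgenCoeff k μ.parts • qgen ((n - k) ::ₘ μ.parts) with hG
  set H : ℕ → SymF := fun j =>
    ∑ ν : (n - j).Partition, qgenCoeff (n - j) ν.parts • qgen (j ::ₘ ν.parts) with hH
  have hH_top : H n = 0 := by
    simp only [hH, Nat.sub_self, qgenCoeff_zero, zero_smul, Finset.sum_const_zero]
  calc ∑ k ∈ Finset.Ico 1 n, pvar k * Qrow (n - k)
      = ∑ k ∈ Finset.Ico 1 n, G k := Finset.sum_congr rfl fun k hk => by
        simp only [hG, ih k hk, Finset.sum_mul, smul_mul_assoc, mul_comm (qgen _), qgen_cons]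
    _ = ∑ j ∈ Finset.Ico 1 n, G (n - j) := by
        rw [Finset.sum_Ico_reflect G 1 (Nat.le_succ n), Nat.add_sub_cancel_left, Nat.add_sub_cancel]
    _ = ∑ j ∈ Finset.Icc 1 n, H j := by
        rw [sum_Icc_eq_sum_Ico_add hn, hH_top, add_zero]
        refine Finset.sum_congr rfl fun j hj => ?_
        simp only [hG, hH, Nat.sub_sub_self (Finset.mem_Ico.1 hj).2.le]
    _ = _ := by
        rw [← sum_sum_parts_erase_eq n fun j m => qgenCoeff (n - j) m • qgen (j ::ₘ m)]
        refine Finset.sum_congr rfl fun l _ => ?_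
        rw [Finset.sum_smul]
        refine Finset.sum_congr rfl fun j hj => ?_
        rw [Multiset.cons_erase (Multiset.mem_toFinset.1 hj)]

theorem pvar_eq_sum_qgenCoeff_smul_qgen {n : ℕ} (hn : 1 ≤ n) :
    pvar n = ∑ μ : n.Partition, qgenCoeff n μ.parts • qgen μ.parts := by
  induction n using Nat.strong_induction_on with
  | _ n ih =>
  have hQ : ((n : F) * al) • Qrow n = ∑ l : n.Partition,
      (if l = Nat.Partition.indiscrete n then (n : F) * al else 0) • qgen l.parts := by
    simp only [ite_smul, zero_smul, Finset.sum_ite_eq', Finset.mem_univ, if_true,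
      Nat.Partition.indiscrete_parts (Nat.one_le_iff_ne_zero.1 hn), qgen, Multiset.map_singleton,
      Multiset.prod_singleton]
  rw [pvar_eq_sub_sum hn, sum_pvar_mul_Qrow_eq hn fun k hk => ih k (Finset.mem_Ico.1 hk).2
    (Finset.mem_Ico.1 hk).1, hQ, ← Finset.sum_sub_distrib]
  refine Finset.sum_congr rfl fun l _ => ?_
  rw [← sub_smul, ← qgenCoeff_eq_ite_sub_sum (Nat.one_le_iff_ne_zero.1 hn)]

end JackPaper

/-- For `n ≥ 1`,
`p_n = Σ_{μ ⊢ n} nα·(−1)^{ℓ(μ)−1}·(ℓ(μ)−1)!/m(μ)! · q_μ(α)`. -/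
theorem statement1 (n : ℕ) (hn : 1 ≤ n) :
    pvar n = ∑ μ : n.Partition,
      ((n : F) * al * (-1 : F) ^ (len μ - 1) * ((len μ - 1).factorial : F) /
        (mfact μ.parts : F)) • qgen μ.parts :=
  JackPaper.pvar_eq_sum_qgenCoeff_smul_qgen hn

end JackPaper
end
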